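/- arXiv:0809.1883 — 2 statements merged into one kernel-verified Lean document; each statement's English description precedes it below -/
import Mathlib

section
/- A 3-dimensional rectangular parallelepiped with side lengths a, b, c can be dissected into finitely many bars (boxes having at most 2 distinct side lengths) if and only if a, b, c are linearly dependent over ℚ, i.e., the ℚ-vector space spanned by a, b, c has dimension at most 2. -/
/-- An axis-parallel box in ℝⁿ with positive side lengths. -/
structure Box (n : ℕ) where
  lower : Fin n → ℝ
  upper : Fin n → ℝ
  lower_lt_upper : ∀ i, lower i < upper i

namespace Box

/-- The closed box as a subset of ℝⁿ. -/
def toSet {n : ℕ} (B : Box n) : Set (Fin n → ℝ) :=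
  Set.univ.pi fun i => Set.Icc (B.lower i) (B.upper i)

/-- The open interior of the box. -/
def interiorSet {n : ℕ} (B : Box n) : Set (Fin n → ℝ) :=
  Set.univ.pi fun i => Set.Ioo (B.lower i) (B.upper i)

/-- The side length of the box in direction `i`. -/
def side {n : ℕ} (B : Box n) (i : Fin n) : ℝ := B.upper i - B.lower i

end Box

/-- The boxes `t` form a finite partition (dissection) of `B`:
pairwise disjoint interiors, and their union covers `B`. -/
def IsDissection {n m : ℕ} (B : Box n) (t : Fin m → Box n) : Prop :=
  (∀ i j, i ≠ j → Disjoint (t i).interiorSet (t j).interiorSet) ∧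
  (⋃ i, (t i).toSet) = B.toSet

/-- `P` is cut by a hyperplane parallel to a pair of its faces into `P₁` and `P₂`. -/
def IsSplit {n : ℕ} (P P₁ P₂ : Box n) : Prop :=
  ∃ (j : Fin n) (c : ℝ), P.lower j < c ∧ c < P.upper j ∧
    P₁.lower = P.lower ∧ P₁.upper = Function.update P.upper j c ∧
    P₂.lower = Function.update P.lower j c ∧ P₂.upper = P.upper

/-!
If the sides `s` of a box are ℚ-dependent, two coefficients of the relation have the same sign,
so one side is a nonnegative rational combination `s k = α * s i + β * s j` of the others.
Cutting the box across direction `k` at height `α * s i` leaves two boxes, each with a pair of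
commensurable sides, and a box whose sides `i ≠ j` are integer multiples of a common `u` is a
grid of boxes whose sides `i` and `j` both equal `u`.

Conversely, if the sides `s i` of `B` are ℚ-independent, choose a ℚ-linear `Φ : ℝ → ℚⁿ` with
`Φ (s i) = eᵢ`. The determinant of the matrix with rows `Φ (side i)` is additive under cutting
a box, since `Φ` is additive and the determinant is linear in each row; so it sums over any
dissection. It is `1` on `B` and `0` on every box with two equal sides.
-/

open Function Finset

namespace Box

variable {n : ℕ}

lemma side_pos (B : Box n) (i : Fin n) : 0 < B.side i :=
  sub_pos.2 (B.lower_lt_upper i)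

lemma exists_side_eq (s : Fin n → ℝ) (hs : ∀ i, 0 < s i) : ∃ B : Box n, B.side = s :=
  ⟨⟨0, s, hs⟩, funext fun i => sub_zero (s i)⟩

lemma isClosed_toSet (B : Box n) : IsClosed B.toSet :=
  isClosed_set_pi fun _ _ => isClosed_Icc

lemma interiorSet_eq_interior (B : Box n) : B.interiorSet = interior B.toSet := by
  simp only [toSet, interiorSet, interior_pi_set Set.finite_univ, interior_Icc]

lemma interiorSet_mono {B B' : Box n} (h : B.toSet ⊆ B'.toSet) :
    B.interiorSet ⊆ B'.interiorSet := by
  simpa only [interiorSet_eq_interior] using interior_mono h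

def splitLower (B : Box n) (j : Fin n) (c : ℝ) (h : B.lower j < c) : Box n where
  lower := B.lower
  upper := update B.upper j c
  lower_lt_upper i := by
    rcases eq_or_ne i j with rfl | hi
    · simpa using h
    · simpa [hi] using B.lower_lt_upper i

def splitUpper (B : Box n) (j : Fin n) (c : ℝ) (h : c < B.upper j) : Box n where
  lower := update B.lower j c
  upper := B.upper
  lower_lt_upper i := by
    rcases eq_or_ne i j with rfl | hi
    · simpa using h
    · simpa [hi] using B.lower_lt_upper i

lemma side_splitLower (B : Box n) (j : Fin n) (c : ℝ) (h : B.lower j < c) :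
    (B.splitLower j c h).side = update B.side j (c - B.lower j) := by
  ext i
  rcases eq_or_ne i j with rfl | hi <;> simp [splitLower, side, *]

lemma side_splitUpper (B : Box n) (j : Fin n) (c : ℝ) (h : c < B.upper j) :
    (B.splitUpper j c h).side = update B.side j (B.upper j - c) := by
  ext i
  rcases eq_or_ne i j with rfl | hi <;> simp [splitUpper, side, *]

lemma isSplit_splitLower_splitUpper (B : Box n) (j : Fin n) (c : ℝ) (h₁ : B.lower j < c)
    (h₂ : c < B.upper j) : IsSplit B (B.splitLower j c h₁) (B.splitUpper j c h₂) :=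
  ⟨j, c, h₁, h₂, rfl, rfl, rfl, rfl⟩

end Box

namespace IsSplit

variable {n : ℕ} {P P₁ P₂ : Box n}

lemma toSet_union (h : IsSplit P P₁ P₂) : P₁.toSet ∪ P₂.toSet = P.toSet := by
  obtain ⟨j, c, h₁, h₂, hl₁, hu₁, hl₂, hu₂⟩ := h
  ext x
  simp only [Box.toSet, Set.mem_union, Set.mem_univ_pi, Set.mem_Icc, hl₁, hu₁, hl₂, hu₂,
    update_apply]
  constructor
  · rintro (hx | hx) i
    all_goals
      have := hx i
      split_ifs at this with hi
      · subst hi; constructor <;> linarith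
      · exact this
  · intro hx
    by_cases hxj : x j ≤ c
    · left; intro i; split_ifs with hi
      · subst hi; exact ⟨(hx i).1, hxj⟩
      · exact hx i
    · right; intro i; split_ifs with hi
      · subst hi; exact ⟨(not_le.1 hxj).le, (hx i).2⟩
      · exact hx i

lemma disjoint_interiorSet (h : IsSplit P P₁ P₂) : Disjoint P₁.interiorSet P₂.interiorSet := by
  obtain ⟨j, c, -, -, -, hu₁, hl₂, -⟩ := h
  refine Set.disjoint_univ_pi.2 ⟨j, Set.Ioo_disjoint_Ioo.2 ?_⟩
  simp only [hu₁, hl₂, update_self]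
  exact (min_le_left _ _).trans (le_max_right _ _)

end IsSplit

section Dissection

variable {n : ℕ}

def HasDissectionInto (p : Box n → Prop) (B : Box n) : Prop :=
  ∃ (m : ℕ) (t : Fin m → Box n), IsDissection B t ∧ ∀ i, p (t i)

lemma IsDissection.toSet_subset {m : ℕ} {B : Box n} {t : Fin m → Box n}
    (h : IsDissection B t) (i : Fin m) : (t i).toSet ⊆ B.toSet :=
  h.2 ▸ Set.subset_iUnion (fun i => (t i).toSet) i

namespace HasDissectionInto

variable {p q : Box n → Prop} {B : Box n}

lemma self (h : p B) : HasDissectionInto p B :=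
  ⟨1, fun _ => B, ⟨fun i j hij => absurd (Subsingleton.elim i j) hij, Set.iUnion_const _⟩,
    fun _ => h⟩

lemma mono (hpq : ∀ Q, p Q → q Q) (h : HasDissectionInto p B) : HasDissectionInto q B :=
  let ⟨m, t, ht, hp⟩ := h
  ⟨m, t, ht, fun i => hpq _ (hp i)⟩

lemma of_fintype {ι : Type} [Fintype ι] (t : ι → Box n)
    (hdisj : Pairwise fun i j => Disjoint (t i).interiorSet (t j).interiorSet)
    (hunion : ⋃ i, (t i).toSet = B.toSet) (hp : ∀ i, p (t i)) : HasDissectionInto p B := by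
  let e := Fintype.equivFin ι
  refine ⟨Fintype.card ι, t ∘ e.symm, ⟨fun i j hij => hdisj (e.symm.injective.ne hij), ?_⟩,
    fun i => hp _⟩
  rw [← hunion]
  exact e.symm.surjective.iUnion_comp fun i => (t i).toSet

lemma of_isSplit {P₁ P₂ : Box n} (hs : IsSplit B P₁ P₂) (h₁ : HasDissectionInto p P₁)
    (h₂ : HasDissectionInto p P₂) : HasDissectionInto p B := by
  obtain ⟨m₁, t₁, ht₁, hp₁⟩ := h₁
  obtain ⟨m₂, t₂, ht₂, hp₂⟩ := h₂
  have hsub₁ i := Box.interiorSet_mono (ht₁.toSet_subset i)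
  have hsub₂ i := Box.interiorSet_mono (ht₂.toSet_subset i)
  refine of_fintype (Sum.elim t₁ t₂) ?_ ?_ (Sum.forall.2 ⟨hp₁, hp₂⟩)
  · rintro (i | i) (j | j) hij
    · exact ht₁.1 i j (ne_of_apply_ne _ hij)
    · exact hs.disjoint_interiorSet.mono (hsub₁ i) (hsub₂ j)
    · exact hs.disjoint_interiorSet.symm.mono (hsub₂ i) (hsub₁ j)
    · exact ht₂.1 i j (ne_of_apply_ne _ hij)
  · simp only [Set.iUnion_sum, Sum.elim_inl, Sum.elim_inr, ht₁.2, ht₂.2, hs.toSet_union]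

lemma of_slabs (j : Fin n) {w : ℝ} (hw : 0 < w) {N : ℕ} (hN : 0 < N)
    (hB : B.side j = N * w) (hslab : ∀ Q : Box n, Q.side = update B.side j w →
      HasDissectionInto p Q) : HasDissectionInto p B := by
  induction N, hN using Nat.le_induction generalizing B with
  | base => exact hslab B (update_eq_self_iff.2 (by simpa using hB.symm)).symm
  | succ N hN ih =>
    have h₁ : B.lower j < B.lower j + w := lt_add_of_pos_right _ hw
    have hBj : B.side j = B.upper j - B.lower j := rfl
    push_cast at hB
    have h₂ : B.lower j + w < B.upper j := by
      have : (1 : ℝ) ≤ N := Nat.one_le_cast.2 hN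
      nlinarith
    refine of_isSplit (B.isSplit_splitLower_splitUpper j _ h₁ h₂)
      (hslab _ (by rw [Box.side_splitLower, add_sub_cancel_left])) (ih ?_ fun Q hQ => hslab Q ?_)
    · rw [Box.side_splitUpper, update_self]
      linarith
    · rwa [Box.side_splitUpper, update_idem] at hQ

lemma of_side_eq_rat_mul {i j : Fin n} (hij : i ≠ j) (r : ℚ)
    (h : B.side i = r * B.side j) : HasDissectionInto (fun Q => ¬ Injective Q.side) B := by
  have hr : 0 < r := by
    have : (0 : ℝ) < r := (pos_iff_pos_of_mul_pos (h ▸ B.side_pos i)).2 (B.side_pos j)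
    exact_mod_cast this
  set u := B.side j / r.den with hu_def
  have hu : 0 < u := div_pos (B.side_pos j) (by positivity)
  have hj : B.side j = r.den * u := by rw [hu_def, mul_div_cancel₀ _ (by positivity)]
  have hi : B.side i = r.num.toNat * u := by
    have hnum : ((r.num.toNat : ℕ) : ℝ) = r.num := by
      exact_mod_cast Int.toNat_of_nonneg (Rat.num_pos.2 hr).le
    rw [h, hj, hnum, ← mul_assoc, ← Rat.cast_natCast, ← Rat.cast_mul, Rat.mul_den_eq_num,
      Rat.cast_intCast]
  refine of_slabs i hu (by have := Rat.num_pos.2 hr; omega) hi fun Q hQ => ?_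
  refine of_slabs j hu r.den_pos (by rw [hQ, update_of_ne hij.symm, hj]) fun R hR => self ?_
  refine fun hinj => hij (hinj ?_)
  rw [hR, hQ, update_self, update_of_ne hij, update_self]

lemma of_side_eq_add {i j k : Fin n} (hki : k ≠ i) (hkj : k ≠ j) {α β : ℚ}
    (hα : 0 ≤ α) (hβ : 0 ≤ β) (h : B.side k = α * B.side i + β * B.side j) :
    HasDissectionInto (fun Q => ¬ Injective Q.side) B := by
  rcases hα.eq_or_lt with rfl | hα
  · exact of_side_eq_rat_mul hkj β (by simpa using h)
  rcases hβ.eq_or_lt with rfl | hβ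
  · exact of_side_eq_rat_mul hki α (by simpa using h)
  have hαi : (0 : ℝ) < α * B.side i := mul_pos (by exact_mod_cast hα) (B.side_pos i)
  have hβj : (0 : ℝ) < β * B.side j := mul_pos (by exact_mod_cast hβ) (B.side_pos j)
  have h₁ : B.lower k < B.lower k + α * B.side i := lt_add_of_pos_right _ hαi
  have hBk : B.side k = B.upper k - B.lower k := rfl
  have h₂ : B.lower k + α * B.side i < B.upper k := by linarith
  refine of_isSplit (B.isSplit_splitLower_splitUpper k _ h₁ h₂) (of_side_eq_rat_mul hki α ?_)
    (of_side_eq_rat_mul hkj β ?_)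
  · rw [Box.side_splitLower, update_self, update_of_ne hki.symm, add_sub_cancel_left]
  · rw [Box.side_splitUpper, update_self, update_of_ne hkj.symm]
    linarith

end HasDissectionInto

end Dissection

lemma Fin.card_image_univ_le_two_iff {α : Type*} [DecidableEq α] {f : Fin 3 → α} :
    (univ.image f).card ≤ 2 ↔ ¬ Injective f := by
  have hle : (univ.image f).card ≤ 3 := card_image_le.trans (by simp)
  rw [← Set.injOn_univ, ← coe_univ, ← card_image_iff, card_univ, Fintype.card_fin]
  omega

lemma exists_eq_rat_mul_add_of_sum_eq_zero {s : Fin 3 → ℝ} (hs : ∀ l, 0 < s l) {q : Fin 3 → ℚ}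
    (hq : ∑ l, q l • s l = 0) (hq₀ : q ≠ 0) {i j k : Fin 3} (hij : i ≠ j) (hki : k ≠ i)
    (hkj : k ≠ j) (hi : q i ≤ 0) (hj : q j ≤ 0) :
    ∃ α β : ℚ, 0 ≤ α ∧ 0 ≤ β ∧ s k = α * s i + β * s j := by
  have huniv : ({i, j, k} : Finset (Fin 3)) = univ :=
    eq_univ_of_card _ (card_eq_three.2 ⟨i, j, k, hij, hki.symm, hkj.symm, rfl⟩)
  have hmem (l : Fin 3) : l = i ∨ l = j ∨ l = k := by simpa [← huniv] using mem_univ l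
  have hk : 0 < q k := by
    by_contra! hk
    have hnonpos (l : Fin 3) : q l • s l ≤ 0 := by
      refine smul_nonpos_of_nonpos_of_nonneg ?_ (hs l).le
      rcases hmem l with rfl | rfl | rfl <;> assumption
    refine hq₀ (funext fun l => ?_)
    have := (sum_eq_zero_iff_of_nonpos fun l _ => hnonpos l).1 hq l (mem_univ l)
    simpa [Rat.smul_def, (hs l).ne'] using this
  have hsum : (q i : ℝ) * s i + q j * s j + q k * s k = 0 := by
    rw [← huniv, sum_insert (by simp [hij, hki.symm]), sum_insert (by simp [hkj.symm]),
      sum_singleton] at hq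
    simpa [Rat.smul_def, add_assoc] using hq
  refine ⟨-q i / q k, -q j / q k, div_nonneg (neg_nonneg.2 hi) hk.le,
    div_nonneg (neg_nonneg.2 hj) hk.le, ?_⟩
  have hk' : (q k : ℝ) ≠ 0 := by exact_mod_cast hk.ne'
  push_cast
  field_simp
  linarith

lemma exists_eq_rat_mul_add_of_not_linearIndependent {s : Fin 3 → ℝ} (hs : ∀ l, 0 < s l)
    (h : ¬ LinearIndependent ℚ s) :
    ∃ i j k : Fin 3, k ≠ i ∧ k ≠ j ∧ ∃ α β : ℚ, 0 ≤ α ∧ 0 ≤ β ∧ s k = α * s i + β * s j := by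
  obtain ⟨q, hq, l, hl⟩ := Fintype.not_linearIndependent_iff.1 h
  have hq₀ : q ≠ 0 := fun h => hl (congrFun h l)
  obtain ⟨i, j, hij, hsign⟩ :=
    Fintype.exists_ne_map_eq_of_card_lt (fun l => decide (0 ≤ q l)) (by simp)
  obtain ⟨k, hki, hkj⟩ := (by decide : ∀ i j : Fin 3, ∃ k, k ≠ i ∧ k ≠ j) i j
  refine ⟨i, j, k, hki, hkj, ?_⟩
  by_cases hi : 0 ≤ q i
  · have hj : 0 ≤ q j := by simpa [hi] using hsign
    refine exists_eq_rat_mul_add_of_sum_eq_zero hs (q := -q) ?_ (neg_ne_zero.2 hq₀) hij hki hkj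
      (neg_nonpos.2 hi) (neg_nonpos.2 hj)
    simp [neg_smul, hq]
  · have hj : ¬ 0 ≤ q j := by simpa [hi] using hsign
    exact exists_eq_rat_mul_add_of_sum_eq_zero hs hq hq₀ hij hki hkj (not_le.1 hi).le
      (not_le.1 hj).le

namespace Box

variable {n : ℕ}

def toBoxIntegral (B : Box n) : BoxIntegral.Box (Fin n) :=
  ⟨B.lower, B.upper, B.lower_lt_upper⟩

lemma mem_toBoxIntegral {B : Box n} {x : Fin n → ℝ} :
    x ∈ B.toBoxIntegral ↔ ∀ i, x i ∈ Set.Ioc (B.lower i) (B.upper i) :=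
  BoxIntegral.Box.mem_def _

lemma toSet_eq_Icc (B : Box n) : B.toSet = BoxIntegral.Box.Icc B.toBoxIntegral := by
  rw [BoxIntegral.Box.Icc_def, toSet, Set.pi_univ_Icc]
  rfl

lemma disjoint_coe_toBoxIntegral {B B' : Box n} (h : Disjoint B.interiorSet B'.interiorSet) :
    Disjoint (B.toBoxIntegral : Set (Fin n → ℝ)) B'.toBoxIntegral := by
  rw [BoxIntegral.Box.coe_eq_pi, BoxIntegral.Box.coe_eq_pi]
  obtain ⟨i, hi⟩ := Set.disjoint_univ_pi.1 h
  exact Set.disjoint_univ_pi.2 ⟨i, Set.Ioc_disjoint_Ioc.2 (Set.Ioo_disjoint_Ioo.1 hi)⟩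

end Box

namespace IsDissection

open Filter Topology

variable {n m : ℕ} {B : Box n} {t : Fin m → Box n}

/-- The boxes of `BoxIntegral` are half-open; `x` is the limit from below of points of `B`,
infinitely many of which lie in one closed tile. -/
lemma exists_mem_toBoxIntegral (h : IsDissection B t) {x : Fin n → ℝ}
    (hx : x ∈ B.toBoxIntegral) : ∃ i, x ∈ (t i).toBoxIntegral := by
  rw [Box.mem_toBoxIntegral] at hx
  have hy : Tendsto (fun s : ℝ => fun k => x k - s) (𝓝[>] 0) (𝓝 x) :=
    ((by fun_prop : Continuous fun s : ℝ => fun k => x k - s).tendsto' 0 x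
      (by simp)).mono_left nhdsWithin_le_nhds
  have hev : ∀ᶠ s in 𝓝[>] (0 : ℝ), ∃ i, 0 < s ∧ (fun k => x k - s) ∈ (t i).toSet := by
    filter_upwards [eventually_mem_nhdsWithin,
      eventually_all.2 fun k => (tendsto_pi_nhds.1 hy k).eventually (lt_mem_nhds (hx k).1)]
      with s hs hlower
    have hB : (fun k => x k - s) ∈ B.toSet := by
      refine Set.mem_univ_pi.2 fun k => ⟨(hlower k).le, ?_⟩
      linarith [(hx k).2, Set.mem_Ioi.1 hs]
    rw [← h.2, Set.mem_iUnion] at hB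
    exact hB.imp fun i hi => ⟨hs, hi⟩
  obtain ⟨i, hi⟩ := frequently_exists.1 hev.frequently
  obtain ⟨s, hs, hsi⟩ := hi.exists
  have hxi : x ∈ (t i).toSet :=
    (t i).isClosed_toSet.mem_of_frequently_of_tendsto (hi.mono fun _ => And.right) hy
  refine ⟨i, Box.mem_toBoxIntegral.2 fun k => ⟨?_, (Set.mem_univ_pi.1 hxi k).2⟩⟩
  linarith [(Set.mem_univ_pi.1 hsi k).1]

lemma injective_toBoxIntegral (h : IsDissection B t) : Injective fun i => (t i).toBoxIntegral := by
  intro i j (hij : (t i).toBoxIntegral = (t j).toBoxIntegral)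
  by_contra hne
  have := Box.disjoint_coe_toBoxIntegral (h.1 i j hne)
  rw [hij, disjoint_self] at this
  exact (BoxIntegral.Box.nonempty_coe _).ne_empty this

def toPrepartition (h : IsDissection B t) : BoxIntegral.Prepartition B.toBoxIntegral where
  boxes := univ.map ⟨_, h.injective_toBoxIntegral⟩
  le_of_mem' J hJ := by
    obtain ⟨i, -, rfl⟩ := mem_map.1 hJ
    rw [Embedding.coeFn_mk, BoxIntegral.Box.le_iff_Icc, ← Box.toSet_eq_Icc, ← Box.toSet_eq_Icc]
    exact h.toSet_subset i
  pairwiseDisjoint := by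
    simp only [coe_map, coe_univ, Set.image_univ]
    rintro _ ⟨i, rfl⟩ _ ⟨j, rfl⟩ hij
    exact Box.disjoint_coe_toBoxIntegral (h.1 i j (ne_of_apply_ne _ hij))

lemma isPartition_toPrepartition (h : IsDissection B t) : h.toPrepartition.IsPartition :=
  fun _ hx =>
    let ⟨i, hi⟩ := h.exists_mem_toBoxIntegral hx
    ⟨_, mem_map_of_mem _ (mem_univ i), hi⟩

lemma sum_boxAdditiveMap {M : Type*} [AddCommMonoid M] (h : IsDissection B t)
    (F : BoxIntegral.BoxAdditiveMap (Fin n) M ⊤) :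
    ∑ i, F (t i).toBoxIntegral = F B.toBoxIntegral := by
  rw [← F.sum_partition_boxes le_top h.isPartition_toPrepartition, toPrepartition, sum_map]
  rfl

end IsDissection

lemma LinearIndependent.exists_linearMap_apply_eq_single {ι K V : Type*} [Field K]
    [AddCommGroup V] [Module K V] [DecidableEq ι] {v : ι → V} (hv : LinearIndependent K v) :
    ∃ Φ : V →ₗ[K] ι → K, ∀ i, Φ (v i) = Pi.single i 1 := by
  obtain ⟨Φ, hΦ⟩ := LinearMap.exists_extend (Finsupp.lcoeFun ∘ₗ hv.repr)
  refine ⟨Φ, fun i => ?_⟩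
  have := LinearMap.congr_fun hΦ ⟨v i, Submodule.subset_span (Set.mem_range_self i)⟩
  simpa [hv.repr_eq_single i ⟨v i, _⟩ rfl, Finsupp.single_eq_pi_single] using this

open BoxIntegral in
def detBoxAdditiveMap {n : ℕ} {R : Type*} [CommRing R] (Φ : ℝ →+ Fin n → R) :
    BoxAdditiveMap (Fin n) R ⊤ :=
  .ofMapSplitAdd (fun I => (Matrix.of fun i => Φ (I.upper i - I.lower i)).det) ⊤
    fun I _ i x hx => by
      rw [Box.splitLower_def hx, Box.splitUpper_def hx]
      set A : Matrix (Fin n) (Fin n) R := Matrix.of fun k => Φ (I.upper k - I.lower k)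
      have hlower : (fun k => Φ (update I.upper i x k - I.lower k)) =
          update A i (Φ (x - I.lower i)) :=
        funext (apply_update (fun k y => Φ (y - I.lower k)) I.upper i x)
      have hupper : (fun k => Φ (I.upper k - update I.lower i x k)) =
          update A i (Φ (I.upper i - x)) :=
        funext (apply_update (fun k y => Φ (I.upper k - y)) I.lower i x)
      have hrow : Φ (x - I.lower i) + Φ (I.upper i - x) = A i := by
        rw [← map_add, sub_add_sub_cancel']
        rfl
      simp only [Option.elim', hlower, hupper]
      rw [← Matrix.updateRow, ← Matrix.updateRow, ← Matrix.det_updateRow_add, hrow,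
        Matrix.updateRow_eq_self]

lemma detBoxAdditiveMap_toBoxIntegral {n : ℕ} {R : Type*} [CommRing R] (Φ : ℝ →+ Fin n → R)
    (B : Box n) : detBoxAdditiveMap Φ B.toBoxIntegral = (Matrix.of fun i => Φ (B.side i)).det :=
  rfl

theorem Box.not_hasDissectionInto_of_linearIndependent {n : ℕ} {B : Box n}
    (hB : LinearIndependent ℚ B.side) :
    ¬ HasDissectionInto (fun Q => ¬ Injective Q.side) B := by
  rintro ⟨m, t, ht, hbar⟩
  obtain ⟨Φ, hΦ⟩ := hB.exists_linearMap_apply_eq_single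
  set F := detBoxAdditiveMap Φ.toAddMonoidHom
  have hF_bar (i : Fin m) : F (t i).toBoxIntegral = 0 := by
    obtain ⟨k, l, hkl, hne⟩ : ∃ k l, (t i).side k = (t i).side l ∧ k ≠ l := by
      simpa [Injective] using hbar i
    rw [detBoxAdditiveMap_toBoxIntegral]
    exact Matrix.det_zero_of_row_eq hne (congrArg Φ hkl)
  have hF_B : F B.toBoxIntegral = 1 := by
    have hone : Matrix.of (fun i => Φ.toAddMonoidHom (B.side i)) = 1 := by
      ext i j
      simp [hΦ, Matrix.one_eq_pi_single]
    rw [detBoxAdditiveMap_toBoxIntegral, hone, Matrix.det_one]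
  simpa [hF_bar, hF_B] using ht.sum_boxAdditiveMap F

/-- A box `a × b × c` can be dissected into bars (boxes with at most 2 distinct side
lengths) iff `a, b, c` are linearly dependent over `ℚ`. -/
theorem box_dissects_into_bars_iff (a b c : ℝ) (ha : 0 < a) (hb : 0 < b) (hc : 0 < c) :
    (∀ B : Box 3, B.side = ![a, b, c] →
      ∃ (m : ℕ) (t : Fin m → Box 3), IsDissection B t ∧
        ∀ i, (Finset.univ.image (t i).side).card ≤ 2) ↔
    ¬ LinearIndependent ℚ ![a, b, c] := by
  constructor
  · intro H hli
    obtain ⟨B, hB⟩ := Box.exists_side_eq ![a, b, c] (by simp [Fin.forall_fin_succ, ha, hb, hc])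
    obtain ⟨m, t, ht, hbar⟩ := H B hB
    exact Box.not_hasDissectionInto_of_linearIndependent (hB ▸ hli)
      ⟨m, t, ht, fun i => Fin.card_image_univ_le_two_iff.1 (hbar i)⟩
  · intro hdep B hB
    obtain ⟨i, j, k, hki, hkj, α, β, hα, hβ, h⟩ :=
      exists_eq_rat_mul_add_of_not_linearIndependent B.side_pos (hB ▸ hdep)
    exact (HasDissectionInto.of_side_eq_add hki hkj hα hβ h).mono
      fun Q => Fin.card_image_univ_le_two_iff.2
end

section
/- Let G be an additive subgroup of ℝ and 1 ≤ K ≤ N. Call an N-dimensional axis-parallel box good if its side lengths in at least K different coordinate directions belong to G. If a box is partitioned into finitely many good boxes, then the box itself is good. -/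
/-!
For any functions `f j : ℝ → R`, the valuation `P ↦ ∏ j, (f j (P.upper j) - f j (P.lower j))`
is additive over dissections. To see it, let `F` be the finite set of all face coordinates and
put two atoms `x ± δ` next to every `x ∈ F`, with `δ` below all gaps of `F`; the atom `x + δ`
gets weight `-f x` and `x - δ` gets `f x`. The weights of the atoms inside an interval with
endpoints in `F` telescope to `f b - f a`, so the valuation of a box is a sum of products of
weights over the atom points in its interior, and each atom point of `B` lies in the interior
of exactly one piece, since atom points avoid every face.

Now suppose fewer than `K` sides of `B` lie in `G`. Each piece then has a side in `G` in a
direction `j` where `B.side j ∉ G`; taking `f j` the indicator of the coset `B.lower j + G` in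
such directions and `f j = id` in the others, every piece has valuation `0` while `B` does not.
-/

open Finset
open scoped Classical

namespace Box

variable {n : ℕ}

lemma mem_toSet {P : Box n} {q : Fin n → ℝ} :
    q ∈ P.toSet ↔ ∀ j, q j ∈ Set.Icc (P.lower j) (P.upper j) :=
  Set.mem_univ_pi

lemma mem_interiorSet {P : Box n} {q : Fin n → ℝ} :
    q ∈ P.interiorSet ↔ ∀ j, q j ∈ Set.Ioo (P.lower j) (P.upper j) :=
  Set.mem_univ_pi

lemma interiorSet_subset_toSet (P : Box n) : P.interiorSet ⊆ P.toSet :=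
  Set.pi_mono fun _ _ => Set.Ioo_subset_Icc_self

noncomputable def faceCoords (P : Box n) : Finset ℝ :=
  univ.image P.lower ∪ univ.image P.upper

lemma lower_mem_faceCoords (P : Box n) (j : Fin n) : P.lower j ∈ P.faceCoords :=
  mem_union_left _ (mem_image_of_mem _ (mem_univ j))

lemma upper_mem_faceCoords (P : Box n) (j : Fin n) : P.upper j ∈ P.faceCoords :=
  mem_union_right _ (mem_image_of_mem _ (mem_univ j))

end Box

def IsBelowGaps (F : Finset ℝ) (δ : ℝ) : Prop :=
  0 < δ ∧ ∀ x ∈ F, ∀ y ∈ F, x < y → δ < y - x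

lemma exists_isBelowGaps (F : Finset ℝ) : ∃ δ, IsBelowGaps F δ := by
  have hsmall : ∀ᶠ δ in nhdsWithin (0 : ℝ) (Set.Ioi 0), ∀ x ∈ F, ∀ y ∈ F, x < y → δ < y - x := by
    simp only [Filter.eventually_all_finset, Filter.eventually_imp_distrib_left]
    exact fun x _ y _ hxy => nhdsWithin_le_nhds (eventually_lt_nhds (sub_pos.2 hxy))
  exact (eventually_mem_nhdsWithin.and hsmall).exists

def atomPos (δ : ℝ) (p : ℝ × Bool) : ℝ := if p.2 then p.1 + δ else p.1 - δ

def atomWeight {R : Type*} [Ring R] (f : ℝ → R) (p : ℝ × Bool) : R :=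
  if p.2 then -f p.1 else f p.1

def atomPoint {n : ℕ} (δ : ℝ) (k : Fin n → ℝ × Bool) : Fin n → ℝ := fun j => atomPos δ (k j)

namespace IsBelowGaps

variable {F : Finset ℝ} {δ : ℝ} (hδ : IsBelowGaps F δ)
include hδ

lemma atomPos_ne {p : ℝ × Bool} (hp : p.1 ∈ F) {y : ℝ} (hy : y ∈ F) : atomPos δ p ≠ y := by
  obtain ⟨hδ0, hgap⟩ := hδ
  obtain ⟨x, _ | _⟩ := p <;>
    simp only [atomPos, Bool.false_eq_true, if_true, if_false] <;> rintro rfl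
  · linarith [hgap _ hy _ hp (by linarith)]
  · linarith [hgap _ hp _ hy (by linarith)]

lemma add_mem_Ioo_iff {x a b : ℝ} (hx : x ∈ F) (ha : a ∈ F) (hb : b ∈ F) :
    x + δ ∈ Set.Ioo a b ↔ x ∈ Set.Ico a b := by
  obtain ⟨hδ0, hgap⟩ := hδ
  constructor
  · rintro ⟨hax, hxb⟩
    refine ⟨not_lt.1 fun hxa => ?_, by linarith⟩
    linarith [hgap _ hx _ ha hxa]
  · rintro ⟨hax, hxb⟩
    exact ⟨by linarith, by linarith [hgap _ hx _ hb hxb]⟩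

lemma sub_mem_Ioo_iff {x a b : ℝ} (hx : x ∈ F) (ha : a ∈ F) (hb : b ∈ F) :
    x - δ ∈ Set.Ioo a b ↔ x ∈ Set.Ioc a b := by
  obtain ⟨hδ0, hgap⟩ := hδ
  constructor
  · rintro ⟨hax, hxb⟩
    refine ⟨by linarith, not_lt.1 fun hbx => ?_⟩
    linarith [hgap _ hb _ hx hbx]
  · rintro ⟨hax, hxb⟩
    exact ⟨by linarith [hgap _ ha _ hx hax], by linarith⟩

lemma sum_atomWeight_Ioo {R : Type*} [CommRing R] (f : ℝ → R) {a b : ℝ} (ha : a ∈ F)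
    (hb : b ∈ F) (hab : a < b) :
    ∑ p ∈ F ×ˢ univ, (if atomPos δ p ∈ Set.Ioo a b then atomWeight f p else 0) = f b - f a := by
  have hatoms : ∀ x ∈ F, ∑ s : Bool,
      (if atomPos δ (x, s) ∈ Set.Ioo a b then atomWeight f (x, s) else 0) =
        (if b = x then f x else 0) - (if a = x then f x else 0) := by
    intro x hx
    simp only [Fintype.sum_bool, atomPos, atomWeight, if_true, Bool.false_eq_true, if_false,
      hδ.add_mem_Ioo_iff hx ha hb, hδ.sub_mem_Ioo_iff hx ha hb, Set.mem_Ico, Set.mem_Ioc]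
    rcases eq_or_ne a x with rfl | hax
    · simp [hab, hab.ne']
    rcases eq_or_ne b x with rfl | hbx
    · simp [hab, hax]
    have hiff : a ≤ x ∧ x < b ↔ a < x ∧ x ≤ b := by
      rw [le_iff_lt_or_eq, le_iff_lt_or_eq]
      simp [hax, hbx.symm]
    simp only [hiff, if_neg hbx, if_neg hax]
    split_ifs <;> simp
  rw [sum_product, sum_congr rfl hatoms, sum_sub_distrib, sum_ite_eq, sum_ite_eq, if_pos hb,
    if_pos ha]

variable {n : ℕ}

lemma atomPoint_mem_interiorSet {k : Fin n → ℝ × Bool}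
    (hk : k ∈ Fintype.piFinset fun _ => F ×ˢ univ) {P : Box n} (hP : P.faceCoords ⊆ F)
    (hkP : atomPoint δ k ∈ P.toSet) : atomPoint δ k ∈ P.interiorSet := by
  refine Box.mem_interiorSet.2 fun j => ?_
  have hkj : (k j).1 ∈ F := (mem_product.1 (Fintype.mem_piFinset.1 hk j)).1
  obtain ⟨hl, hu⟩ := Box.mem_toSet.1 hkP j
  exact ⟨hl.lt_of_ne (hδ.atomPos_ne hkj (hP (P.lower_mem_faceCoords j))).symm,
    hu.lt_of_ne (hδ.atomPos_ne hkj (hP (P.upper_mem_faceCoords j)))⟩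

lemma sum_atomWeight_interiorSet {R : Type*} [CommRing R] (f : Fin n → ℝ → R) {P : Box n}
    (hP : P.faceCoords ⊆ F) :
    ∑ k ∈ Fintype.piFinset (fun _ => F ×ˢ univ),
      (if atomPoint δ k ∈ P.interiorSet then ∏ j, atomWeight (f j) (k j) else 0) =
      ∏ j, (f j (P.upper j) - f j (P.lower j)) := by
  calc _ = ∑ k ∈ Fintype.piFinset (fun _ => F ×ˢ univ), ∏ j,
          (if atomPos δ (k j) ∈ Set.Ioo (P.lower j) (P.upper j)
            then atomWeight (f j) (k j) else 0) := by
        refine sum_congr rfl fun k _ => ?_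
        rw [Fintype.prod_ite_zero]
        congr 1
        exact propext Box.mem_interiorSet
    _ = ∏ j, ∑ p ∈ F ×ˢ univ,
          (if atomPos δ p ∈ Set.Ioo (P.lower j) (P.upper j) then atomWeight (f j) p else 0) :=
        sum_prod_piFinset (F ×ˢ univ) fun j p =>
          if atomPos δ p ∈ Set.Ioo (P.lower j) (P.upper j) then atomWeight (f j) p else 0
    _ = _ := prod_congr rfl fun j _ => hδ.sum_atomWeight_Ioo (f j)
        (hP (P.lower_mem_faceCoords j)) (hP (P.upper_mem_faceCoords j)) (P.lower_lt_upper j)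

end IsBelowGaps

namespace IsDissection

variable {n m : ℕ} {B : Box n} {t : Fin m → Box n}

lemma toSet_subset_s16 (ht : IsDissection B t) (i : Fin m) : (t i).toSet ⊆ B.toSet :=
  ht.2 ▸ Set.subset_iUnion (fun i => (t i).toSet) i

lemma sum_ite_mem_interiorSet {M : Type*} [AddCommMonoid M] (ht : IsDissection B t)
    {q : Fin n → ℝ} (hqB : q ∈ B.toSet → q ∈ B.interiorSet)
    (hqt : ∀ i, q ∈ (t i).toSet → q ∈ (t i).interiorSet) (c : M) :
    ∑ i, (if q ∈ (t i).interiorSet then c else 0) = if q ∈ B.interiorSet then c else 0 := by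
  by_cases hq : q ∈ B.interiorSet
  · obtain ⟨i₀, hi₀⟩ := Set.mem_iUnion.1 (ht.2 ▸ B.interiorSet_subset_toSet hq)
    have hqi₀ := hqt i₀ hi₀
    rw [if_pos hq, sum_eq_single i₀ (fun i _ hi => if_neg fun hqi =>
      Set.disjoint_left.1 (ht.1 i i₀ hi) hqi hqi₀) (by simp), if_pos hqi₀]
  · refine (sum_eq_zero fun i _ => if_neg fun hqi => hq ?_).trans (if_neg hq).symm
    exact hqB (ht.toSet_subset_s16 i ((t i).interiorSet_subset_toSet hqi))

theorem sum_prod_sub_eq {R : Type*} [CommRing R] (ht : IsDissection B t)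
    (f : Fin n → ℝ → R) :
    ∑ i, ∏ j, (f j ((t i).upper j) - f j ((t i).lower j)) =
      ∏ j, (f j (B.upper j) - f j (B.lower j)) := by
  set F := B.faceCoords ∪ univ.biUnion fun i => (t i).faceCoords
  have hBF : B.faceCoords ⊆ F := subset_union_left
  have htF : ∀ i, (t i).faceCoords ⊆ F := fun i =>
    (subset_biUnion_of_mem (fun i => (t i).faceCoords) (mem_univ i)).trans subset_union_right
  obtain ⟨δ, hδ⟩ := exists_isBelowGaps F
  let A := Fintype.piFinset fun _ : Fin n => F ×ˢ (univ : Finset Bool)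
  let w : (Fin n → ℝ × Bool) → R := fun k => ∏ j, atomWeight (f j) (k j)
  calc _ = ∑ i, ∑ k ∈ A, (if atomPoint δ k ∈ (t i).interiorSet then w k else 0) :=
        sum_congr rfl fun i _ => (hδ.sum_atomWeight_interiorSet f (htF i)).symm
    _ = ∑ k ∈ A, ∑ i, (if atomPoint δ k ∈ (t i).interiorSet then w k else 0) := sum_comm
    _ = ∑ k ∈ A, (if atomPoint δ k ∈ B.interiorSet then w k else 0) :=
        sum_congr rfl fun k hk => ht.sum_ite_mem_interiorSet
          (hδ.atomPoint_mem_interiorSet hk hBF)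
          (fun i => hδ.atomPoint_mem_interiorSet hk (htF i)) (w k)
    _ = _ := hδ.sum_atomWeight_interiorSet f hBF

end IsDissection

theorem good_box_theorem_general_general (N K : ℕ)
    (G : AddSubgroup ℝ) (B : Box N) (m : ℕ) (t : Fin m → Box N)
    (ht : IsDissection B t)
    (hgood : ∀ i, ∃ s : Finset (Fin N), K ≤ s.card ∧ ∀ j ∈ s, (t i).side j ∈ G) :
    ∃ s : Finset (Fin N), K ≤ s.card ∧ ∀ j ∈ s, B.side j ∈ G := by
  set good := univ.filter fun j => B.side j ∈ G
  by_cases hK : K ≤ #good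
  · exact ⟨good, hK, fun j hj => (mem_filter.1 hj).2⟩
  have hbad : ∀ i, ∃ j, (t i).side j ∈ G ∧ B.side j ∉ G := fun i => by
    obtain ⟨s, hs, hsG⟩ := hgood i
    obtain ⟨j, hjs, hj⟩ := exists_mem_notMem_of_card_lt_card ((not_le.1 hK).trans_le hs)
    exact ⟨j, hsG j hjs, fun hjB => hj (mem_filter.2 ⟨mem_univ j, hjB⟩)⟩
  let f : Fin N → ℝ → ℝ := fun j x =>
    if B.side j ∈ G then x else if (x : ℝ ⧸ G) = B.lower j then 1 else 0
  have hpiece : ∀ i, ∏ j, (f j ((t i).upper j) - f j ((t i).lower j)) = 0 := fun i => by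
    obtain ⟨j, hjt, hjB⟩ := hbad i
    have hcoset : ((t i).upper j : ℝ ⧸ G) = (t i).lower j := QuotientAddGroup.eq_iff_sub_mem.2 hjt
    exact prod_eq_zero (mem_univ j) (by simp only [f, if_neg hjB, hcoset, sub_self])
  have hbox : ∏ j, (f j (B.upper j) - f j (B.lower j)) ≠ 0 := prod_ne_zero_iff.2 fun j _ => by
    by_cases hj : B.side j ∈ G
    · simpa only [f, if_pos hj] using sub_ne_zero.2 (B.lower_lt_upper j).ne'
    · have hcoset : (B.upper j : ℝ ⧸ G) ≠ B.lower j := mt QuotientAddGroup.eq_iff_sub_mem.1 hj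
      simp [f, hj, hcoset]
  exact absurd (by rw [← ht.sum_prod_sub_eq f, sum_eq_zero fun i _ => hpiece i]) hbox

/-- If a box is partitioned into boxes each having side lengths in `G` in at least `K`
coordinate directions, then the box itself has side lengths in `G` in at least `K`
coordinate directions. -/
theorem good_box_theorem_general (N K : ℕ) (hK1 : 1 ≤ K) (hKN : K ≤ N)
    (G : AddSubgroup ℝ) (B : Box N) (m : ℕ) (t : Fin m → Box N)
    (ht : IsDissection B t)
    (hgood : ∀ i, ∃ s : Finset (Fin N), K ≤ s.card ∧ ∀ j ∈ s, (t i).side j ∈ G) :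
    ∃ s : Finset (Fin N), K ≤ s.card ∧ ∀ j ∈ s, B.side j ∈ G :=
  good_box_theorem_general_general N K G B m t ht hgood
end
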